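/- Soundness and completeness of Outcome Logic with variable assignment: in the Outcome Logic instance whose only atomic actions are assignments x := E, for every program C and all outcome assertions φ, ψ ⊆ W(S), the triple ⟨φ⟩C⟨ψ⟩ is derivable (⊢ ⟨φ⟩C⟨ψ⟩, with no oracle axioms for atomic actions) if and only if it is semantically valid (⊨ ⟨φ⟩C⟨ψ⟩). -/

import Mathlib

open scoped Classical

universe u v

/-- A semiring that is simultaneously a complete lattice with bottom `0`, whose order
coincides with the natural (additive) order, and in which addition and multiplication
are Scott-continuous. -/
class OLSemiring (U : Type u) extends Semiring U, CompleteLattice U where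
  bot_eq_zero : (⊥ : U) = 0
  le_iff_exists_add : ∀ a b : U, a ≤ b ↔ ∃ c, a + c = b
  add_scott : ∀ (D : Set U), D.Nonempty → DirectedOn (· ≤ ·) D → ∀ y : U,
    sSup ((fun x => x + y) '' D) = sSup D + y
  mul_scott_right : ∀ (D : Set U), D.Nonempty → DirectedOn (· ≤ ·) D → ∀ y : U,
    sSup ((fun x => x * y) '' D) = sSup D * y
  mul_scott_left : ∀ (D : Set U), D.Nonempty → DirectedOn (· ≤ ·) D → ∀ y : U,
    sSup ((fun x => y * x) '' D) = y * sSup D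

variable {U : Type u} [OLSemiring U]

/-- Infinite sum: supremum over finite subfamilies of finite sums. -/
noncomputable def wsum {I : Type v} (f : I → U) : U :=
  ⨆ J : Finset I, ∑ i ∈ J, f i

/-- The unit of the weighting monad. -/
noncomputable def eta {X : Type u} (x : X) : X → U :=
  fun y => if y = x then 1 else 0

/-- Kleisli extension: `kext f m y = ∑_{x ∈ supp m} m x * f x y`. -/
noncomputable def kext {X Y : Type u} (f : X → Y → U) (m : X → U) : Y → U :=
  fun y => wsum (fun x : Function.support m => m x.1 * f x.1 y)

/-- Syntax of tests over primitive tests indexed by `TI`. -/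
inductive TestExpr (TI : Type u) : Type u where
  | prim (t : TI)
  | tt
  | ff
  | and (b₁ b₂ : TestExpr TI)
  | or (b₁ b₂ : TestExpr TI)
  | not (b : TestExpr TI)

/-- The set of states at which a test is true. -/
def testSet {St TI : Type u} (tsem : TI → Set St) : TestExpr TI → Set St
  | .prim t => tsem t
  | .tt => Set.univ
  | .ff => ∅
  | .and b₁ b₂ => testSet tsem b₁ ∩ testSet tsem b₂
  | .or b₁ b₂ => testSet tsem b₁ ∪ testSet tsem b₂
  | .not b => (testSet tsem b)ᶜ

/-- Expressions: a test or a weight. -/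
inductive Expr (U : Type u) (TI : Type u) : Type u where
  | test (b : TestExpr TI)
  | wt (u : U)

/-- Evaluation of expressions into weights. -/
noncomputable def eeval {St TI : Type u} (tsem : TI → Set St) : Expr U TI → St → U
  | .test b => fun σ => if σ ∈ testSet tsem b then 1 else 0
  | .wt u => fun _ => u

/-- Programs. -/
inductive Prog (U St TI Act : Type u) : Type u where
  | skip
  | seq (C₁ C₂ : Prog U St TI Act)
  | choice (C₁ C₂ : Prog U St TI Act)
  | assume (e : Expr U TI)
  | iter (C : Prog U St TI Act) (e e' : Expr U TI)
  | act (a : Act)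

/-- The characteristic function of iteration. -/
noncomputable def Phi {St : Type u} (w w' : St → U) (g : St → St → U)
    (f : St → St → U) : St → St → U :=
  fun σ τ => w σ * kext f (g σ) τ + w' σ * eta σ τ

/-- Denotational semantics of programs. -/
noncomputable def sem {St TI Act : Type u} (tsem : TI → Set St)
    (asem : Act → St → St → U) : Prog U St TI Act → St → St → U
  | .skip => fun σ => eta σ
  | .seq C₁ C₂ => fun σ => kext (sem tsem asem C₂) (sem tsem asem C₁ σ)
  | .choice C₁ C₂ => fun σ τ => sem tsem asem C₁ σ τ + sem tsem asem C₂ σ τ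
  | .assume e => fun σ τ => eeval tsem e σ * eta σ τ
  | .iter C e e' =>
      ⨆ n : ℕ, (Phi (eeval tsem e) (eeval tsem e') (sem tsem asem C))^[n] (fun _ _ => 0)
  | .act a => asem a

/-- Outcome assertions. -/
abbrev OA (U : Type u) (St : Type u) := Set (St → U)

/-- Binary outcome conjunction. -/
def oplus {St : Type u} (φ ψ : OA U St) : OA U St :=
  { m | ∃ m₁ ∈ φ, ∃ m₂ ∈ ψ, m = fun σ => m₁ σ + m₂ σ }

/-- Indexed outcome conjunction. -/
noncomputable def bigOplus {St T : Type u} (φ : T → OA U St) : OA U St :=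
  { m | ∃ f : T → St → U, (∀ t, f t ∈ φ t) ∧ m = fun σ => wsum (fun t => f t σ) }

/-- Right scaling of an assertion by a weight. -/
def odotR {St : Type u} (φ : OA U St) (u : U) : OA U St :=
  { m' | ∃ m ∈ φ, m' = fun σ => m σ * u }

/-- Left scaling of an assertion by a weight. -/
def odotL {St : Type u} (u : U) (φ : OA U St) : OA U St :=
  { m' | ∃ m ∈ φ, m' = fun σ => u * m σ }

/-- `φ ⊨ e = u` : the expression `e` evaluates to `u` on the support of every `m ∈ φ`. -/
def entailsEq {St TI : Type u} (tsem : TI → Set St) (φ : OA U St)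
    (e : Expr U TI) (u : U) : Prop :=
  ∀ m ∈ φ, ∀ σ, m σ ≠ 0 → eeval tsem e σ = u

/-- Semantic validity of an outcome triple. -/
def valid {St TI Act : Type u} (tsem : TI → Set St) (asem : Act → St → St → U)
    (φ : OA U St) (C : Prog U St TI Act) (ψ : OA U St) : Prop :=
  ∀ m ∈ φ, kext (sem tsem asem C) m ∈ ψ

/-- The family `ψ` of assertions converges to `ψlim`. -/
def convergesTo {St : Type u} (ψ : ℕ → OA U St) (ψlim : OA U St) : Prop :=
  ∀ ms : ℕ → St → U, (∀ n, ms n ∈ ψ n) → (fun σ => wsum (fun n => ms n σ)) ∈ ψlim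

/-- The Outcome Logic proof system (with oracle axioms for valid atomic triples). -/
inductive Deriv {St TI Act : Type u} (tsem : TI → Set St) (asem : Act → St → St → U) :
    OA U St → Prog U St TI Act → OA U St → Prop where
  | atom {φ ψ} (a : Act) :
      valid tsem asem φ (.act a) ψ → Deriv tsem asem φ (.act a) ψ
  | skip (φ) : Deriv tsem asem φ .skip φ
  | seq {φ ϑ ψ C₁ C₂} :
      Deriv tsem asem φ C₁ ϑ → Deriv tsem asem ϑ C₂ ψ →
      Deriv tsem asem φ (.seq C₁ C₂) ψ
  | plus {φ ψ₁ ψ₂ C₁ C₂} :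
      Deriv tsem asem φ C₁ ψ₁ → Deriv tsem asem φ C₂ ψ₂ →
      Deriv tsem asem φ (.choice C₁ C₂) (oplus ψ₁ ψ₂)
  | assume {φ e u} :
      entailsEq tsem φ e u → Deriv tsem asem φ (.assume e) (odotR φ u)
  | iter {C e e'} (φn ψn : ℕ → OA U St) (ψlim : OA U St) :
      convergesTo ψn ψlim →
      (∀ n, Deriv tsem asem (φn n) (.seq (.assume e) C) (φn (n + 1))) →
      (∀ n, Deriv tsem asem (φn n) (.assume e') (ψn n)) →
      Deriv tsem asem (φn 0) (.iter C e e') ψlim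
  | false (C φ) : Deriv tsem asem ∅ C φ
  | true (C φ) : Deriv tsem asem φ C Set.univ
  | scale {φ ψ C} (u : U) :
      Deriv tsem asem φ C ψ → Deriv tsem asem (odotL u φ) C (odotL u ψ)
  | disj {φ₁ φ₂ ψ₁ ψ₂ C} :
      Deriv tsem asem φ₁ C ψ₁ → Deriv tsem asem φ₂ C ψ₂ →
      Deriv tsem asem (φ₁ ∪ φ₂) C (ψ₁ ∪ ψ₂)
  | conj {φ₁ φ₂ ψ₁ ψ₂ C} :
      Deriv tsem asem φ₁ C ψ₁ → Deriv tsem asem φ₂ C ψ₂ →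
      Deriv tsem asem (φ₁ ∩ φ₂) C (ψ₁ ∩ ψ₂)
  | choice {T : Type u} {C} (φ φ' : T → OA U St) :
      (∀ t, Deriv tsem asem (φ t) C (φ' t)) →
      Deriv tsem asem (bigOplus φ) C (bigOplus φ')
  | exists_ {T : Type u} {C} (φ φ' : T → OA U St) :
      (∀ t, Deriv tsem asem (φ t) C (φ' t)) →
      Deriv tsem asem (⋃ t, φ t) C (⋃ t, φ' t)
  | conseq {φ φ' ψ ψ' C} :
      φ' ⊆ φ → Deriv tsem asem φ C ψ → ψ ⊆ ψ' →
      Deriv tsem asem φ' C ψ'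

/-! ## The instance with variables and state -/

/-- Program stores: maps from variables to integers. -/
abbrev Store (Var : Type) := Var → ℤ

/-- Arithmetic expressions over variables `Var` (tests evaluate to 0 or 1). -/
inductive AExpr (Var : Type) : Type where
  | var (x : Var)
  | const (v : ℤ)
  | test (b : TestExpr (Set (Store Var)))
  | add (E₁ E₂ : AExpr Var)
  | sub (E₁ E₂ : AExpr Var)
  | mul (E₁ E₂ : AExpr Var)

/-- Evaluation of arithmetic expressions. -/
noncomputable def aeval {Var : Type} : AExpr Var → Store Var → ℤ
  | .var x, s => s x
  | .const v, _ => v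
  | .test b, s => if s ∈ testSet id b then 1 else 0
  | .add E₁ E₂, s => aeval E₁ s + aeval E₂ s
  | .sub E₁ E₂, s => aeval E₁ s - aeval E₂ s
  | .mul E₁ E₂, s => aeval E₁ s * aeval E₂ s

/-- Semantics of the assignment action `x := E` : `⟦x:=E⟧(s) = η(s[x↦⟦E⟧(s)])`. -/
noncomputable def asemAssign (U : Type) [OLSemiring U] {Var : Type} :
    Var × AExpr Var → Store Var → Store Var → U :=
  fun a s => eta (Function.update s a.1 (aeval a.2 s))

/-- Programs of the instance with state: primitive tests are all subsets of stores and
atomic actions are assignments. -/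
abbrev ProgS (U Var : Type) := Prog U (Store Var) (Set (Store Var)) (Var × AExpr Var)

/-- Substitution on outcome assertions:
`φ[E/x] = {m | (λs. η(s[x↦⟦E⟧(s)]))†(m) ∈ φ}`. -/
def substOA {U : Type} [OLSemiring U] {Var : Type} (x : Var) (E : AExpr Var)
    (φ : OA U (Store Var)) : OA U (Store Var) :=
  { m | kext (fun s => eta (Function.update s x (aeval E s))) m ∈ φ }

/-- `◻P = {m | supp(m) ⊆ P}`. -/
def boxOA {U : Type} [OLSemiring U] {Var : Type} (P : Set (Store Var)) :
    OA U (Store Var) :=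
  { m | Function.support m ⊆ P }

/-- The free variables of an assertion on stores. -/
def freeVars {Var : Type} (P : Set (Store Var)) : Set Var :=
  { x | ∃ s ∈ P, ∃ v : ℤ, Function.update s x v ∉ P }

/-- The variables modified by a program. -/
def modVars {U Var : Type} : ProgS U Var → Set Var
  | .skip => ∅
  | .seq C₁ C₂ => modVars C₁ ∪ modVars C₂
  | .choice C₁ C₂ => modVars C₁ ∪ modVars C₂
  | .assume _ => ∅
  | .iter C _ _ => modVars C
  | .act a => {a.1}

/-- The Outcome Logic proof system for the instance with variable assignment (no oracle
axioms for atomic actions; instead the rules `Assign` and `Constancy`). -/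
inductive DerivA {U : Type} [OLSemiring U] {Var : Type} :
    OA U (Store Var) → ProgS U Var → OA U (Store Var) → Prop where
  | skip (φ) : DerivA φ .skip φ
  | seq {φ ϑ ψ C₁ C₂} :
      DerivA φ C₁ ϑ → DerivA ϑ C₂ ψ → DerivA φ (.seq C₁ C₂) ψ
  | plus {φ ψ₁ ψ₂ C₁ C₂} :
      DerivA φ C₁ ψ₁ → DerivA φ C₂ ψ₂ →
      DerivA φ (.choice C₁ C₂) (oplus ψ₁ ψ₂)
  | assume {φ e u} :
      entailsEq id φ e u → DerivA φ (.assume e) (odotR φ u)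
  | iter {C e e'} (φn ψn : ℕ → OA U (Store Var)) (ψlim : OA U (Store Var)) :
      convergesTo ψn ψlim →
      (∀ n, DerivA (φn n) (.seq (.assume e) C) (φn (n + 1))) →
      (∀ n, DerivA (φn n) (.assume e') (ψn n)) →
      DerivA (φn 0) (.iter C e e') ψlim
  | false (C φ) : DerivA ∅ C φ
  | true (C φ) : DerivA φ C Set.univ
  | scale {φ ψ C} (u : U) :
      DerivA φ C ψ → DerivA (odotL u φ) C (odotL u ψ)
  | disj {φ₁ φ₂ ψ₁ ψ₂ C} :
      DerivA φ₁ C ψ₁ → DerivA φ₂ C ψ₂ →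
      DerivA (φ₁ ∪ φ₂) C (ψ₁ ∪ ψ₂)
  | conj {φ₁ φ₂ ψ₁ ψ₂ C} :
      DerivA φ₁ C ψ₁ → DerivA φ₂ C ψ₂ →
      DerivA (φ₁ ∩ φ₂) C (ψ₁ ∩ ψ₂)
  | choice {T : Type} {C} (φ φ' : T → OA U (Store Var)) :
      (∀ t, DerivA (φ t) C (φ' t)) →
      DerivA (bigOplus φ) C (bigOplus φ')
  | exists_ {T : Type} {C} (φ φ' : T → OA U (Store Var)) :
      (∀ t, DerivA (φ t) C (φ' t)) →
      DerivA (⋃ t, φ t) C (⋃ t, φ' t)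
  | conseq {φ φ' ψ ψ' C} :
      φ' ⊆ φ → DerivA φ C ψ → ψ ⊆ ψ' → DerivA φ' C ψ'
  | assign (x : Var) (E : AExpr Var) (φ) :
      DerivA (substOA x E φ) (.act (x, E)) φ
  | constancy {φ ψ C} (P : Set (Store Var)) :
      DerivA φ C ψ → freeVars P ∩ modVars C = ∅ →
      DerivA (φ ∩ boxOA P) C (ψ ∩ boxOA P)

/-!
Soundness is rule-by-rule: each rule of the proof system is an algebraic law of the Kleisli
extension `kext` (unit laws, associativity, linearity in the kernel and in the weighting), and
Scott-continuity turns `⟦iter(C, e, e')⟧†(m)` into the sum over `n` of `n` unrollings of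
`assume e; C` followed by `assume e'`, which is exactly what the Iter rule's convergence
hypothesis speaks about. Constancy holds because a program that modifies no free variable of `P`
never leaves `P`.

Completeness needs no oracle: for every weighting `m` the singleton triple
`⟨{m}⟩ C ⟨{⟦C⟧†(m)}⟩` is derivable, by induction on `C`. The Assign rule is exactly the weakest
precondition of `x := E`, and iteration is handled by the Iter rule with the singletons of the
successive unrollings. A valid triple then follows by the Exists rule over `m ∈ φ` and Consequence.
-/

namespace OLSemiring

instance (priority := 100) toCanonicallyOrderedAdd : CanonicallyOrderedAdd U where
  exists_add_of_le h := let ⟨c, hc⟩ := (le_iff_exists_add _ _).1 h; ⟨c, hc.symm⟩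
  le_add_self a b := (le_iff_exists_add a (b + a)).2 ⟨b, add_comm a b⟩
  le_self_add a b := (le_iff_exists_add a (a + b)).2 ⟨b, rfl⟩

instance (priority := 100) toIsOrderedAddMonoid : IsOrderedAddMonoid U :=
  CanonicallyOrderedAdd.toIsOrderedAddMonoid

variable {ι : Type*} [Preorder ι] [IsDirectedOrder ι] [Nonempty ι] {x y : ι → U}

theorem iSup_add (hx : Monotone x) (u : U) : (⨆ i, x i) + u = ⨆ i, x i + u := by
  rw [← sSup_range, ← add_scott _ (Set.range_nonempty x) (directedOn_range.2 hx.directed_le),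
    ← Set.range_comp, sSup_range]
  rfl

theorem iSup_mul (hx : Monotone x) (u : U) : (⨆ i, x i) * u = ⨆ i, x i * u := by
  rw [← sSup_range, ← mul_scott_right _ (Set.range_nonempty x) (directedOn_range.2 hx.directed_le),
    ← Set.range_comp, sSup_range]
  rfl

theorem mul_iSup (hx : Monotone x) (u : U) : u * (⨆ i, x i) = ⨆ i, u * x i := by
  rw [← sSup_range, ← mul_scott_left _ (Set.range_nonempty x) (directedOn_range.2 hx.directed_le),
    ← Set.range_comp, sSup_range]
  rfl

theorem iSup_add_iSup (hx : Monotone x) (hy : Monotone y) :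
    (⨆ i, x i) + (⨆ i, y i) = ⨆ i, x i + y i := by
  refine le_antisymm ?_ (iSup_le fun i => add_le_add (le_iSup x i) (le_iSup y i))
  rw [iSup_add hx]
  refine iSup_le fun i => ?_
  rw [add_comm, iSup_add hy]
  refine iSup_le fun j => ?_
  obtain ⟨k, hik, hjk⟩ := exists_ge_ge i j
  calc y j + x i ≤ x k + y k := by rw [add_comm]; exact add_le_add (hx hik) (hy hjk)
    _ ≤ ⨆ k, x k + y k := le_iSup (fun k => x k + y k) k

theorem sum_iSup {I : Type*} {g : ι → I → U} (hg : ∀ a, Monotone (g · a)) (K : Finset I) :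
    ∑ a ∈ K, ⨆ i, g i a = ⨆ i, ∑ a ∈ K, g i a := by
  induction K using Finset.cons_induction with
  | empty => simp
  | cons a K ha ih =>
    simp only [Finset.sum_cons, ih]
    exact iSup_add_iSup (hg a) fun i j hij => Finset.sum_le_sum fun b _ => hg b hij

end OLSemiring

open OLSemiring

section Wsum

variable {I J : Type*} {f g : I → U}

theorem sum_le_wsum (f : I → U) (K : Finset I) : ∑ i ∈ K, f i ≤ wsum f :=
  le_iSup (fun K : Finset I => ∑ i ∈ K, f i) K

theorem wsum_le {z : U} (h : ∀ K : Finset I, ∑ i ∈ K, f i ≤ z) : wsum f ≤ z :=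
  iSup_le h

theorem wsum_mono (h : ∀ i, f i ≤ g i) : wsum f ≤ wsum g :=
  iSup_mono fun _ => Finset.sum_le_sum fun i _ => h i

theorem wsum_eq_zero (h : ∀ i, f i = 0) : wsum f = 0 := by
  simp [wsum, h]

theorem wsum_eq_single (a : I) (h : ∀ i, i ≠ a → f i = 0) : wsum f = f a := by
  refine le_antisymm (wsum_le fun K => ?_) (by simpa using sum_le_wsum f {a})
  calc ∑ i ∈ K, f i ≤ ∑ i ∈ insert a K, f i := Finset.sum_le_sum_of_subset (K.subset_insert a)
    _ = f a := Finset.sum_eq_single_of_mem a (Finset.mem_insert_self a K) fun i _ => h i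

theorem wsum_subtype {p : I → Prop} (h : ∀ i, ¬ p i → f i = 0) :
    wsum (fun i : Subtype p => f i) = wsum f := by
  refine le_antisymm (wsum_le fun K => ?_) (wsum_le fun K => ?_)
  · simpa using sum_le_wsum f (K.map (Function.Embedding.subtype p))
  · calc ∑ i ∈ K, f i = ∑ i ∈ K.filter p, f i :=
          (Finset.sum_filter_of_ne fun i _ hfi => by_contra fun hp => hfi (h i hp)).symm
      _ = ∑ i ∈ K.subtype p, f i := (Finset.sum_subtype_eq_sum_filter f).symm
      _ ≤ _ := sum_le_wsum _ _

theorem wsum_add (f g : I → U) : wsum (fun i => f i + g i) = wsum f + wsum g := by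
  simp only [wsum, Finset.sum_add_distrib]
  exact (iSup_add_iSup (Finset.sum_mono_set f) (Finset.sum_mono_set g)).symm

theorem wsum_mul (f : I → U) (u : U) : wsum f * u = wsum fun i => f i * u := by
  simp only [wsum, iSup_mul (Finset.sum_mono_set f), Finset.sum_mul]

theorem mul_wsum (f : I → U) (u : U) : u * wsum f = wsum fun i => u * f i := by
  simp only [wsum, mul_iSup (Finset.sum_mono_set f), Finset.mul_sum]

theorem wsum_iSup {ι : Type*} [Preorder ι] [IsDirectedOrder ι] [Nonempty ι] {g : ι → I → U}
    (hg : ∀ a, Monotone (g · a)) : wsum (fun a => ⨆ i, g i a) = ⨆ i, wsum (g i) := by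
  simp only [wsum, sum_iSup hg]
  exact iSup_comm

theorem wsum_wsum_eq_iSup (F : I → J → U) :
    wsum (fun i => wsum (F i)) = ⨆ (K : Finset I) (L : Finset J), ∑ i ∈ K, ∑ j ∈ L, F i j := by
  simp only [wsum]
  exact iSup_congr fun K => sum_iSup (fun i => Finset.sum_mono_set (F i)) K

theorem wsum_comm (F : I → J → U) :
    wsum (fun i => wsum (F i)) = wsum fun j => wsum fun i => F i j := by
  rw [wsum_wsum_eq_iSup, wsum_wsum_eq_iSup, iSup_comm]
  exact iSup_congr fun L => iSup_congr fun K => Finset.sum_comm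

theorem wsum_nat (f : ℕ → U) : wsum f = ⨆ n, ∑ k ∈ Finset.range n, f k := by
  refine le_antisymm (wsum_le fun K => ?_) (iSup_le fun n => sum_le_wsum f _)
  obtain ⟨n, hn⟩ := Finset.exists_nat_subset_range K
  exact (Finset.sum_le_sum_of_subset hn).trans (le_iSup (fun n => ∑ k ∈ Finset.range n, f k) n)

end Wsum

section Kext

variable {X Y Z : Type u}

theorem eq_of_eta_ne_zero {x y : X} (h : eta (U := U) x y ≠ 0) : y = x := by
  by_contra hne
  exact h (if_neg hne)

theorem kext_eq (f : X → Y → U) (m : X → U) (y : Y) :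
    kext f m y = wsum fun x => m x * f x y :=
  wsum_subtype (f := fun x => m x * f x y) fun x hx => by
    rw [Function.notMem_support.1 hx, zero_mul]

theorem kext_eta (m : X → U) : kext eta m = m := by
  funext y
  rw [kext_eq, wsum_eq_single y fun x hx => by simp [eta, Ne.symm hx]]
  simp [eta]

theorem kext_kext (g : Y → Z → U) (f : X → Y → U) (m : X → U) :
    kext g (kext f m) = kext (fun x => kext g (f x)) m := by
  funext z
  calc kext g (kext f m) z
      = wsum fun y => wsum fun x => m x * f x y * g y z := by
        simp only [kext_eq, wsum_mul]
    _ = wsum fun x => wsum fun y => m x * (f x y * g y z) := by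
        rw [wsum_comm]
        simp only [mul_assoc]
    _ = kext (fun x => kext g (f x)) m z := by
        simp only [kext_eq, mul_wsum]

theorem kext_add (f g : X → Y → U) (m : X → U) :
    kext (fun x y => f x y + g x y) m = fun y => kext f m y + kext g m y := by
  funext y
  simp only [kext_eq, mul_add, wsum_add]

theorem kext_weight (w : X → U) (f : X → Y → U) (m : X → U) :
    kext (fun x y => w x * f x y) m = kext f fun x => m x * w x := by
  funext y
  simp only [kext_eq, mul_assoc]

theorem kext_weight_eta (w : X → U) (m : X → U) :
    kext (fun x y => w x * eta x y) m = fun y => m y * w y := by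
  rw [kext_weight, kext_eta]

theorem kext_mul_left (u : U) (f : X → Y → U) (m : X → U) :
    kext f (fun x => u * m x) = fun y => u * kext f m y := by
  funext y
  simp only [kext_eq, mul_wsum, mul_assoc]

theorem kext_wsum {T : Type*} (f : X → Y → U) (ms : T → X → U) :
    kext f (fun x => wsum fun t => ms t x) = fun y => wsum fun t => kext f (ms t) y := by
  funext y
  simp only [kext_eq, wsum_mul]
  exact wsum_comm _

theorem kext_mono {f g : X → Y → U} (h : f ≤ g) (m : X → U) : kext f m ≤ kext g m := by
  intro y
  simp only [kext_eq]
  exact wsum_mono fun x => mul_le_mul_right (h x y) (m x)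

theorem kext_iSup {F : ℕ → X → Y → U} (hF : Monotone F) (m : X → U) (y : Y) :
    kext (⨆ n, F n) m y = ⨆ n, kext (F n) m y := by
  simp only [kext_eq, iSup_apply]
  rw [← wsum_iSup fun x _ _ hab => mul_le_mul_right (hF hab x y) (m x)]
  exact congrArg wsum (funext fun x => mul_iSup (fun _ _ hab => hF hab x y) (m x))

theorem support_kext_subset {f : X → Y → U} {m : X → U} {P : Set X} {Q : Set Y}
    (hm : Function.support m ⊆ P) (hf : ∀ x ∈ P, Function.support (f x) ⊆ Q) :
    Function.support (kext f m) ⊆ Q := by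
  intro y hy
  by_contra hyQ
  refine hy ((kext_eq f m y).trans (wsum_eq_zero fun x => ?_))
  by_cases hx : m x = 0
  · rw [hx, zero_mul]
  · rw [Function.notMem_support.1 fun hy' => hyQ (hf x (hm hx) hy'), mul_zero]

end Kext

section Semantics

variable {St TI Act : Type u} (tsem : TI → Set St) (asem : Act → St → St → U)

theorem kext_sem_assume (e : Expr U TI) (m : St → U) :
    kext (sem tsem asem (.assume e)) m = fun σ => m σ * eeval tsem e σ :=
  kext_weight_eta _ m

theorem kext_sem_seq (C₁ C₂ : Prog U St TI Act) (m : St → U) :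
    kext (sem tsem asem (.seq C₁ C₂)) m
      = kext (sem tsem asem C₂) (kext (sem tsem asem C₁) m) :=
  (kext_kext _ _ m).symm

theorem kext_Phi (w w' : St → U) (g f : St → St → U) (m : St → U) :
    kext (Phi w w' g f) m = fun τ => kext f (kext g fun σ => m σ * w σ) τ + m τ * w' τ := by
  change kext (fun σ τ => w σ * kext f (g σ) τ + w' σ * eta σ τ) m = _
  rw [kext_add, kext_weight, kext_weight_eta, kext_kext]

theorem monotone_iterate_Phi (w w' : St → U) (g : St → St → U) :
    Monotone fun n => (Phi w w' g)^[n] fun _ _ => 0 := by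
  refine monotone_nat_of_le_succ fun n => ?_
  induction n with
  | zero => exact fun _ _ => zero_le
  | succ n ih =>
    rw [Function.iterate_succ_apply', Function.iterate_succ_apply']
    exact fun σ τ => add_le_add_left (mul_le_mul_right (kext_mono ih _ τ) _) _

noncomputable def iterOutcome (e : Expr U TI) (C : Prog U St TI Act) (m : St → U) (n : ℕ) :
    St → U :=
  (kext (sem tsem asem (.seq (.assume e) C)))^[n] m

theorem iterOutcome_succ (e : Expr U TI) (C : Prog U St TI Act) (m : St → U) (n : ℕ) :
    iterOutcome tsem asem e C m (n + 1)
      = kext (sem tsem asem (.seq (.assume e) C)) (iterOutcome tsem asem e C m n) :=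
  Function.iterate_succ_apply' _ n m

theorem kext_iterate_Phi (e e' : Expr U TI) (C : Prog U St TI Act) (n : ℕ) (m : St → U) :
    kext ((Phi (eeval tsem e) (eeval tsem e') (sem tsem asem C))^[n] fun _ _ => 0) m
      = fun τ => ∑ k ∈ Finset.range n, iterOutcome tsem asem e C m k τ * eeval tsem e' τ := by
  induction n generalizing m with
  | zero =>
    funext τ
    rw [Finset.sum_range_zero, Function.iterate_zero_apply, kext_eq]
    exact wsum_eq_zero fun _ => mul_zero _
  | succ n ih =>
    have hstep : kext (sem tsem asem C) (fun σ => m σ * eeval tsem e σ)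
        = iterOutcome tsem asem e C m 1 := by
      rw [iterOutcome, Function.iterate_one, kext_sem_seq, kext_sem_assume]
    funext τ
    rw [Function.iterate_succ_apply', kext_Phi, hstep, ih, Finset.sum_range_succ']
    simp only [iterOutcome, ← Function.iterate_add_apply, Function.iterate_zero_apply]

theorem kext_sem_iter (e e' : Expr U TI) (C : Prog U St TI Act) (m : St → U) :
    kext (sem tsem asem (.iter C e e')) m
      = fun τ => wsum fun n => iterOutcome tsem asem e C m n τ * eeval tsem e' τ := by
  funext τ
  rw [sem, kext_iSup (monotone_iterate_Phi _ _ _), wsum_nat]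
  simp only [kext_iterate_Phi]

end Semantics

section Invariance

variable {X : Type u}

def IsKernelInvariant (f : X → X → U) (P : Set X) : Prop :=
  ∀ x ∈ P, Function.support (f x) ⊆ P

variable {P : Set X} {f g : X → X → U}

theorem isKernelInvariant_eta : IsKernelInvariant (eta (U := U)) P :=
  fun _ hx _ hy => (eq_of_eta_ne_zero hy).symm ▸ hx

theorem IsKernelInvariant.kext_comp (hf : IsKernelInvariant f P) (hg : IsKernelInvariant g P) :
    IsKernelInvariant (fun x => kext g (f x)) P :=
  fun x hx => support_kext_subset (hf x hx) hg

theorem IsKernelInvariant.add (hf : IsKernelInvariant f P) (hg : IsKernelInvariant g P) :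
    IsKernelInvariant (fun x y => f x y + g x y) P := by
  intro x hx y hy
  by_cases hfy : f x y = 0
  · exact hg x hx fun hgy => hy (by simp only [hfy, hgy, add_zero])
  · exact hf x hx hfy

theorem IsKernelInvariant.weight (w : X → U) (hf : IsKernelInvariant f P) :
    IsKernelInvariant (fun x y => w x * f x y) P :=
  fun x hx _ hy => hf x hx (right_ne_zero_of_mul hy)

theorem IsKernelInvariant.Phi (w w' : X → U) (hg : IsKernelInvariant g P)
    (hf : IsKernelInvariant f P) : IsKernelInvariant (Phi w w' g f) P :=
  ((hg.kext_comp hf).weight w).add (isKernelInvariant_eta.weight w')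

theorem isKernelInvariant_iSup {F : ℕ → X → X → U} (hF : ∀ n, IsKernelInvariant (F n) P) :
    IsKernelInvariant (⨆ n, F n) P := by
  intro x hx y hy
  obtain ⟨n, hn⟩ : ∃ n, F n x y ≠ 0 := by
    by_contra! h
    exact hy (by simp only [iSup_apply, h, ciSup_const])
  exact hF n x hx hn

end Invariance

section Assertions

variable {St T : Type u}

theorem oplus_singleton (m₁ m₂ : St → U) :
    oplus {m₁} {m₂} = {fun σ => m₁ σ + m₂ σ} := by
  ext m
  simp [oplus]

theorem odotR_singleton (m : St → U) (u : U) : odotR {m} u = {fun σ => m σ * u} := by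
  ext m'
  simp [odotR]

theorem bigOplus_singleton (f : T → St → U) :
    bigOplus (fun t => {f t}) = {fun σ => wsum fun t => f t σ} := by
  ext m
  simp [bigOplus, ← funext_iff]

end Assertions

section Assignment

variable {U : Type} [OLSemiring U] {Var : Type}

local notation "⟦" C "⟧" => sem id (asemAssign U) C

theorem isKernelInvariant_asemAssign {P : Set (Store Var)} {a : Var × AExpr Var}
    (ha : a.1 ∉ freeVars P) : IsKernelInvariant (asemAssign U a) P := by
  intro s hs t ht
  rw [eq_of_eta_ne_zero ht]
  by_contra hP
  exact ha ⟨s, hs, _, hP⟩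

theorem isKernelInvariant_sem {P : Set (Store Var)} (C : ProgS U Var)
    (hC : ∀ x ∈ modVars C, x ∉ freeVars P) : IsKernelInvariant ⟦C⟧ P := by
  induction C with
  | skip => exact isKernelInvariant_eta
  | seq C₁ C₂ ih₁ ih₂ =>
    exact (ih₁ fun x hx => hC x (.inl hx)).kext_comp (ih₂ fun x hx => hC x (.inr hx))
  | choice C₁ C₂ ih₁ ih₂ =>
    exact (ih₁ fun x hx => hC x (.inl hx)).add (ih₂ fun x hx => hC x (.inr hx))
  | assume e => exact isKernelInvariant_eta.weight _
  | iter C e e' ih =>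
    refine isKernelInvariant_iSup fun n => ?_
    induction n with
    | zero => exact fun _ _ _ h => absurd rfl h
    | succ n ihn =>
      rw [Function.iterate_succ_apply']
      exact (ih hC).Phi _ _ ihn
  | act a => exact isKernelInvariant_asemAssign (hC a.1 rfl)



theorem derivA_sound {φ ψ : OA U (Store Var)} {C : ProgS U Var} (h : DerivA φ C ψ) :
    valid id (asemAssign U) φ C ψ := by
  induction h with
  | skip φ => exact fun m hm => (kext_eta m).symm ▸ hm
  | seq _ _ ih₁ ih₂ => exact fun m hm => (kext_sem_seq _ _ _ _ m).symm ▸ ih₂ _ (ih₁ m hm)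
  | plus _ _ ih₁ ih₂ => exact fun m hm => ⟨_, ih₁ m hm, _, ih₂ m hm, kext_add _ _ m⟩
  | @assume _ e _ he =>
    intro m hm
    refine ⟨m, hm, (kext_sem_assume _ _ e m).trans (funext fun σ => ?_)⟩
    by_cases hσ : m σ = 0
    · rw [hσ, zero_mul, zero_mul]
    · rw [he m hm σ hσ]
  | @iter C e e' φn _ _ hconv _ _ ih ih' =>
    intro m hm
    have hφn : ∀ n, iterOutcome id (asemAssign U) e C m n ∈ φn n := by
      intro n
      induction n with
      | zero => exact hm
      | succ n ihn => exact iterOutcome_succ _ _ e C m n ▸ ih n _ ihn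
    rw [kext_sem_iter]
    refine hconv _ fun n => ?_
    simpa only [kext_sem_assume] using ih' n _ (hφn n)
  | false => exact fun m hm => hm.elim
  | true => exact fun _ _ => trivial
  | scale u _ ih => exact fun _ ⟨m, hm, hm'⟩ => ⟨_, ih m hm, hm' ▸ kext_mul_left u _ m⟩
  | disj _ _ ih₁ ih₂ => exact fun m hm => hm.imp (ih₁ m) (ih₂ m)
  | conj _ _ ih₁ ih₂ => exact fun m hm => ⟨ih₁ m hm.1, ih₂ m hm.2⟩
  | choice _ _ _ ih =>
    exact fun _ ⟨ms, hms, hm⟩ => ⟨_, fun t => ih t _ (hms t), hm ▸ kext_wsum _ ms⟩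
  | exists_ _ _ _ ih =>
    intro m hm
    obtain ⟨t, ht⟩ := Set.mem_iUnion.1 hm
    exact Set.mem_iUnion.2 ⟨t, ih t m ht⟩
  | conseq hφ _ hψ ih => exact fun m hm => hψ (ih m (hφ hm))
  | assign => exact fun _ hm => hm
  | @constancy _ _ C _ _ hP ih =>
    refine fun m ⟨hm, hmP⟩ => ⟨ih m hm, support_kext_subset hmP (isKernelInvariant_sem C ?_)⟩
    exact fun x hx hxP => (Set.eq_empty_iff_forall_notMem.1 hP x) ⟨hxP, hx⟩

/-- The Assume rule needs `e` to be constant on the support of the precondition, so `m` is split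
into its point masses with the Choice rule. -/
theorem derivA_assume_singleton (e : Expr U (Set (Store Var))) (m : Store Var → U) :
    DerivA {m} (.assume e) {kext ⟦.assume e⟧ m} := by
  have hpoint : ∀ σ, DerivA {fun τ => m σ * eta σ τ} (.assume e)
      {fun τ => m σ * eta σ τ * eeval id e σ} := by
    intro σ
    rw [← odotR_singleton]
    refine DerivA.assume ?_
    rintro _ rfl τ hτ
    rw [eq_of_eta_ne_zero (right_ne_zero_of_mul hτ)]
  have h := DerivA.choice _ _ hpoint
  rw [bigOplus_singleton, bigOplus_singleton] at h
  convert h using 2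
  · funext τ
    rw [← kext_eq, kext_eta]
  · rw [kext_sem_assume]
    funext τ
    rw [wsum_eq_single τ fun σ hσ => by simp [eta, Ne.symm hσ]]
    simp [eta]

theorem derivA_singleton (C : ProgS U Var) (m : Store Var → U) :
    DerivA {m} C {kext ⟦C⟧ m} := by
  induction C generalizing m with
  | skip => exact (kext_eta m).symm ▸ DerivA.skip {m}
  | seq C₁ C₂ ih₁ ih₂ => exact (kext_sem_seq _ _ _ _ m).symm ▸ (ih₁ m).seq (ih₂ _)
  | choice C₁ C₂ ih₁ ih₂ =>
    have h := (ih₁ m).plus (ih₂ m)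
    rwa [oplus_singleton, ← kext_add] at h
  | assume e => exact derivA_assume_singleton e m
  | iter C e e' ih =>
    refine DerivA.iter (fun n => {iterOutcome id (asemAssign U) e C m n}) _ _ ?_
      (fun n => ?_) (fun _ => derivA_assume_singleton e' _)
    · intro ms hms
      simp only [Set.mem_singleton_iff] at hms ⊢
      simp only [hms, kext_sem_assume, kext_sem_iter]
    · rw [iterOutcome_succ, kext_sem_seq]
      exact (derivA_assume_singleton e _).seq (ih _)
  | act a =>
    obtain ⟨x, E⟩ := a
    refine .conseq ?_ (.assign x E {kext ⟦.act (x, E)⟧ m}) subset_rfl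
    exact Set.singleton_subset_iff.2 rfl

end Assignment

theorem assignment_instance_sound_complete_general (U : Type) [OLSemiring U]
    (Var : Type)
    (C : ProgS U Var) (φ ψ : OA U (Store Var)) :
    DerivA φ C ψ ↔ valid id (asemAssign U) φ C ψ := by
  refine ⟨derivA_sound, fun hvalid => ?_⟩
  have h := DerivA.exists_ _ _ fun t : φ => derivA_singleton C t.1
  rw [Set.iUnion_singleton_eq_range, Set.iUnion_singleton_eq_range, Subtype.range_coe] at h
  exact h.conseq subset_rfl (Set.range_subset_iff.2 fun t => hvalid t.1 t.2)

/-- **Soundness and completeness of Outcome Logic with variable assignment**: in the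
instance whose only atomic actions are assignments `x := E`, a triple is derivable
(with no oracle axioms) iff it is semantically valid. -/
theorem assignment_instance_sound_complete (U : Type) [OLSemiring U]
    (Var : Type) [Countable Var]
    (C : ProgS U Var) (φ ψ : OA U (Store Var)) :
    DerivA φ C ψ ↔ valid id (asemAssign U) φ C ψ :=
  assignment_instance_sound_complete_general U Var C φ ψ
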